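/- Let d ≥ 1, p ∈ [1,∞), let Ω ⊆ ℝ^d be open, let H be a polarizer, and let u : ℝ^d → [0,∞) be measurable with u = 0 on ℝ^d \ Ω. If u ∈ L^p(Ω), then P_H(u) ∈ L^p(P_H(Ω)), P_H(u) = 0 on ℝ^d \ P_H(Ω), and ‖P_H(u)‖_{L^p(P_H(Ω))} = ‖u‖_{L^p(Ω)}. -/

import Mathlib

open MeasureTheory Metric Set ENNReal

noncomputable section

/-- `d`-dimensional Euclidean space. -/
abbrev Euc (d : ℕ) : Type := EuclideanSpace ℝ (Fin d)

/-- The open affine half-space (polarizer) `{x : ⟪x, h⟫ < a}`. -/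
def halfSpace {d : ℕ} (h : Euc d) (a : ℝ) : Set (Euc d) :=
  {x : Euc d | (inner ℝ x h : ℝ) < a}

/-- Reflection across the affine hyperplane `{x : ⟪x, h⟫ = a}`:
`σ_H x = x - 2(⟪x,h⟫ - a) h`. -/
def reflH {d : ℕ} (h : Euc d) (a : ℝ) (x : Euc d) : Euc d :=
  x - (2 * ((inner ℝ x h : ℝ) - a)) • h

/-- Polarization of a set with respect to the polarizer `H = {x : ⟪x,h⟫ < a}`. -/
def polSet {d : ℕ} (h : Euc d) (a : ℝ) (Ω : Set (Euc d)) : Set (Euc d) :=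
  ((Ω ∪ reflH h a '' Ω) ∩ halfSpace h a) ∪ (Ω ∩ reflH h a '' Ω)

/-- Dual polarization of a set. -/
def polSetDual {d : ℕ} (h : Euc d) (a : ℝ) (Ω : Set (Euc d)) : Set (Euc d) :=
  ((Ω ∪ reflH h a '' Ω) ∩ (halfSpace h a)ᶜ) ∪ (Ω ∩ reflH h a '' Ω)

/-- Polarization of a function. -/
def polFun {d : ℕ} (h : Euc d) (a : ℝ) (u : Euc d → ℝ) (x : Euc d) : ℝ :=
  if (inner ℝ x h : ℝ) < a then max (u x) (u (reflH h a x)) else min (u x) (u (reflH h a x))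

/-- The `p`-th power of the Gagliardo seminorm `[u]_{s,p}^p`. -/
def gagP (d : ℕ) (s p : ℝ) (u : Euc d → ℝ) : ℝ≥0∞ :=
  ∫⁻ z : Euc d × Euc d, ENNReal.ofReal (|u z.1 - u z.2| ^ p / dist z.1 z.2 ^ ((d : ℝ) + s * p))

/-- Membership in the fractional Sobolev space `W^{s,p}_0(Ω)`. -/
def memW0 (d : ℕ) (s p : ℝ) (Ω : Set (Euc d)) (u : Euc d → ℝ) : Prop :=
  MemLp u (ENNReal.ofReal p) (volume : Measure (Euc d)) ∧
  gagP d s p u < ⊤ ∧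
  ∀ᵐ x : Euc d, x ∉ Ω → u x = 0

/-- The first `q`-eigenvalue `λ^s_{p,q}(Ω) = inf {[u]_{s,p}^p : u ∈ W^{s,p}_0(Ω), ‖u‖_{L^q(Ω)} = 1}`. -/
def lamSPQ (d : ℕ) (s p q : ℝ) (Ω : Set (Euc d)) : ℝ≥0∞ :=
  sInf { l : ℝ≥0∞ | ∃ u : Euc d → ℝ, memW0 d s p Ω u ∧
    (∫⁻ x in Ω, ENNReal.ofReal (|u x| ^ q)) = 1 ∧ l = gagP d s p u }

/-- `q ∈ [1, p*_s)` where `p*_s = dp/(d - sp)` if `sp < d` and `p*_s = ∞` otherwise. -/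
def subcritical (d : ℕ) (s p q : ℝ) : Prop :=
  1 ≤ q ∧ (s * p < (d : ℝ) → q < ((d : ℝ) * p) / ((d : ℝ) - s * p))

/-- The first standard basis vector `e₁` of `ℝ^d`. -/
def e1Vec (d : ℕ) : Euc d :=
  (EuclideanSpace.equiv (Fin d) ℝ).symm (fun i => if (i : ℕ) = 0 then 1 else 0)

/-- The annular domain `Ω_t = B_R(0) \ cl(B_r(t e₁))`. -/
def annulus (d : ℕ) (r R t : ℝ) : Set (Euc d) :=
  ball (0 : Euc d) R \ closure (ball (t • e1Vec d) r)

/-- `Ω` has a boundary of class `C^{1,1}`: near each boundary point, `Ω` is (in suitable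
coordinates) the region below the graph of a `C^1` function with Lipschitz derivative,
and the boundary is the graph. -/
def HasC11Boundary {d : ℕ} (Ω : Set (Euc d)) : Prop :=
  ∀ x ∈ frontier Ω, ∃ (ν : Euc d) (r : ℝ) (f : Euc d → ℝ) (K : NNReal),
    ‖ν‖ = 1 ∧ 0 < r ∧ ContDiff ℝ 1 f ∧ LipschitzWith K (fderiv ℝ f) ∧
    ∀ y ∈ ball x r,
      (y ∈ Ω ↔ (inner ℝ y ν : ℝ) < f (y - ((inner ℝ y ν : ℝ)) • ν)) ∧
      (y ∈ frontier Ω ↔ (inner ℝ y ν : ℝ) = f (y - ((inner ℝ y ν : ℝ)) • ν))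

/-- `G(t) = |t|^{p-2} t`. -/
def Gp (p t : ℝ) : ℝ := |t| ^ (p - 2) * t

/-- Steiner symmetry with respect to the hyperplane `{x₁ = 0}`, characterized via
polarizations by half-spaces `H_a = {x : x₁ < a}`. -/
def SteinerSymmE1 (d : ℕ) (A : Set (Euc d)) : Prop :=
  (∀ a : ℝ, 0 ≤ a → polSet (e1Vec d) a A = A) ∧
  (∀ a : ℝ, a ≤ 0 → polSetDual (e1Vec d) a A = A)

/-- Foliated Schwarz symmetry with respect to the ray `c + ℝ⁺ η`, characterized via
polarizations by half-spaces containing the ray with `c` on the boundary hyperplane. -/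
def FoliatedSchwarzSymm (d : ℕ) (c η : Euc d) (A : Set (Euc d)) : Prop :=
  ∀ (h : Euc d) (b : ℝ), ‖h‖ = 1 →
    (∀ t : ℝ, 0 < t → c + t • η ∈ halfSpace h b) → (inner ℝ c h : ℝ) = b →
    polSet h b A = A

/-- The simple rotation with plane of rotation `span{η, ξ}` and angle `θ`, fixing the
orthogonal complement of the plane pointwise. -/
def rotMap (d : ℕ) (η ξ : Euc d) (θ : ℝ) (x : Euc d) : Euc d :=
  x - (inner ℝ x η : ℝ) • η - (inner ℝ x ξ : ℝ) • ξ
    + (Real.cos θ * (inner ℝ x η : ℝ) - Real.sin θ * (inner ℝ x ξ : ℝ)) • η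
    + (Real.sin θ * (inner ℝ x η : ℝ) + Real.cos θ * (inner ℝ x ξ : ℝ)) • ξ

/-!
Write `σ` for the reflection across `∂H`. For every `x` the pair `(P_H u x, P_H u (σ x))` is a
permutation of `(u x, u (σ x))`, so `Φ ∘ P_H u + Φ ∘ P_H u ∘ σ = Φ ∘ u + Φ ∘ u ∘ σ` pointwise for
any `Φ`. Integrating and using that `σ` preserves Lebesgue measure gives
`2 ∫ Φ ∘ P_H u = 2 ∫ Φ ∘ u`; with `Φ t = t ^ p` this is the equality of `L^p` norms, once one checks
that `P_H u` vanishes off `P_H Ω`.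
-/

section Polarization

variable {d : ℕ} {h : Euc d} {a : ℝ}

lemma inner_reflH (hh : ‖h‖ = 1) (x : Euc d) :
    (inner ℝ (reflH h a x) h : ℝ) = 2 * a - inner ℝ x h := by
  have hhh : (inner ℝ h h : ℝ) = 1 := by rw [real_inner_self_eq_norm_sq, hh, one_pow]
  simp only [reflH, inner_sub_left, real_inner_smul_left, hhh]
  ring

lemma reflH_eq_self_of_inner_eq {x : Euc d} (hx : (inner ℝ x h : ℝ) = a) : reflH h a x = x := by
  simp [reflH, hx]

lemma reflH_involutive (hh : ‖h‖ = 1) : Function.Involutive (reflH h a) := fun x => by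
  conv_lhs => rw [reflH, inner_reflH hh, reflH]
  module

lemma measurePreserving_reflH (hh : ‖h‖ = 1) :
    MeasurePreserving (reflH h a) (volume : Measure (Euc d)) volume := by
  have hlin : ∀ x : Euc d,
      ((ℝ ∙ h)ᗮ.reflection x : Euc d) = x - (2 * (inner ℝ x h : ℝ)) • h := by
    intro x
    rw [Submodule.reflection_orthogonal_apply, Submodule.reflection_singleton_apply, hh,
      real_inner_comm h x]
    push_cast
    module
  have hdecomp :
      reflH h a = (· + (2 * a) • h) ∘ ((ℝ ∙ h)ᗮ.reflection : Euc d ≃ₗᵢ[ℝ] Euc d) := by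
    funext x
    simp only [Function.comp_apply, hlin, reflH]
    module
  rw [hdecomp]
  exact (measurePreserving_add_right volume _).comp (LinearIsometryEquiv.measurePreserving _)

lemma measurable_polFun {u : Euc d → ℝ} (hu : Measurable u) : Measurable (polFun h a u) := by
  have hσ : Measurable (reflH h a) := by unfold reflH; fun_prop
  exact Measurable.ite (measurableSet_lt (by fun_prop) measurable_const)
    (hu.max (hu.comp hσ)) (hu.min (hu.comp hσ))

lemma map_max_add_map_min {M : Type*} [AddCommMagma M] (Φ : ℝ → M) (s t : ℝ) :
    Φ (max s t) + Φ (min s t) = Φ s + Φ t := by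
  rcases le_total s t with hst | hts
  · rw [max_eq_right hst, min_eq_left hst, add_comm]
  · rw [max_eq_left hts, min_eq_right hts]

lemma map_polFun_add_map_polFun_reflH {M : Type*} [AddCommMagma M] (hh : ‖h‖ = 1)
    (u : Euc d → ℝ) (Φ : ℝ → M) (x : Euc d) :
    Φ (polFun h a u x) + Φ (polFun h a u (reflH h a x))
      = Φ (u x) + Φ (u (reflH h a x)) := by
  have hσσ : reflH h a (reflH h a x) = x := reflH_involutive hh x
  rcases lt_trichotomy (inner ℝ x h : ℝ) a with hx | hx | hx
  · have hσx : ¬ (inner ℝ (reflH h a x) h : ℝ) < a := by rw [inner_reflH hh]; linarith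
    simp only [polFun, if_pos hx, if_neg hσx, hσσ, min_comm (u (reflH h a x))]
    exact map_max_add_map_min Φ _ _
  · simp [polFun, reflH_eq_self_of_inner_eq hx]
  · have hσx : (inner ℝ (reflH h a x) h : ℝ) < a := by rw [inner_reflH hh]; linarith
    simp only [polFun, if_neg (not_lt.2 hx.le), if_pos hσx, hσσ, max_comm (u (reflH h a x))]
    rw [add_comm, map_max_add_map_min, add_comm]

theorem lintegral_comp_polFun (hh : ‖h‖ = 1) {u : Euc d → ℝ} (hu : Measurable u)
    {Φ : ℝ → ℝ≥0∞} (hΦ : Measurable Φ) :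
    ∫⁻ x, Φ (polFun h a u x) = ∫⁻ x, Φ (u x) := by
  have hσ := measurePreserving_reflH (a := a) hh
  have hG : Measurable fun x => Φ (polFun h a u x) := hΦ.comp (measurable_polFun hu)
  have hF : Measurable fun x => Φ (u x) := hΦ.comp hu
  have hdouble : 2 * ∫⁻ x, Φ (polFun h a u x) = 2 * ∫⁻ x, Φ (u x) := calc
    2 * ∫⁻ x, Φ (polFun h a u x)
        = (∫⁻ x, Φ (polFun h a u x)) + ∫⁻ x, Φ (polFun h a u (reflH h a x)) := by
          rw [two_mul, hσ.lintegral_comp hG]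
    _ = ∫⁻ x, (Φ (polFun h a u x) + Φ (polFun h a u (reflH h a x))) :=
          (lintegral_add_left hG _).symm
    _ = ∫⁻ x, (Φ (u x) + Φ (u (reflH h a x))) := by
          simp_rw [map_polFun_add_map_polFun_reflH hh]
    _ = (∫⁻ x, Φ (u x)) + ∫⁻ x, Φ (u (reflH h a x)) := lintegral_add_left hF _
    _ = 2 * ∫⁻ x, Φ (u x) := by rw [hσ.lintegral_comp hF, two_mul]
  exact (ENNReal.mul_right_inj two_ne_zero ofNat_ne_top).1 hdouble

lemma polFun_eq_zero_of_notMem_polSet (hh : ‖h‖ = 1) {Ω : Set (Euc d)} {u : Euc d → ℝ}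
    (hu_nonneg : ∀ x, 0 ≤ u x) (hu_zero : ∀ x, x ∉ Ω → u x = 0) {x : Euc d}
    (hx : x ∉ polSet h a Ω) : polFun h a u x = 0 := by
  have hmem : ∀ {y}, y ∈ reflH h a '' Ω ↔ reflH h a y ∈ Ω := by
    intro y
    rw [(reflH_involutive hh).image_eq_preimage_symm, mem_preimage]
  simp only [polSet, halfSpace, mem_union, mem_inter_iff, mem_ofPred_eq, hmem] at hx
  unfold polFun
  split_ifs with hxH
  · rw [hu_zero x (by tauto), hu_zero _ (by tauto), max_self]
  · by_cases hxΩ : x ∈ Ω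
    · exact (congrArg _ (hu_zero _ (by tauto))).trans (min_eq_right (hu_nonneg x))
    · exact (congrArg (min · _) (hu_zero x hxΩ)).trans (min_eq_left (hu_nonneg _))

end Polarization

theorem lp_norm_polarization_general (d : ℕ) (p : ℝ) (hp : 1 ≤ p)
    (Ω : Set (Euc d))
    (h : Euc d) (a : ℝ) (hh : ‖h‖ = 1)
    (u : Euc d → ℝ) (hum : Measurable u) (hupos : ∀ x, 0 ≤ u x)
    (hu0 : ∀ x, x ∉ Ω → u x = 0)
    (huLp : (∫⁻ x in Ω, ENNReal.ofReal (u x ^ p)) < ⊤) :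
    (∀ x, x ∉ polSet h a Ω → polFun h a u x = 0) ∧
    (∫⁻ x in polSet h a Ω, ENNReal.ofReal (polFun h a u x ^ p)) < ⊤ ∧
    (∫⁻ x in polSet h a Ω, ENNReal.ofReal (polFun h a u x ^ p))
      = ∫⁻ x in Ω, ENNReal.ofReal (u x ^ p) := by
  have hvanish : ∀ x, x ∉ polSet h a Ω → polFun h a u x = 0 :=
    fun x => polFun_eq_zero_of_notMem_polSet hh hupos hu0
  have hp0 : p ≠ 0 := (zero_lt_one.trans_le hp).ne'
  have hnorm : (∫⁻ x in polSet h a Ω, ENNReal.ofReal (polFun h a u x ^ p))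
      = ∫⁻ x in Ω, ENNReal.ofReal (u x ^ p) := calc
    _ = ∫⁻ x, ENNReal.ofReal (polFun h a u x ^ p) :=
        setLIntegral_eq_of_support_subset <| Function.support_subset_iff'.2 fun x hx => by
          simp [hvanish x hx, hp0]
    _ = ∫⁻ x, ENNReal.ofReal (u x ^ p) :=
        lintegral_comp_polFun hh hum (Φ := fun t => ENNReal.ofReal (t ^ p)) (by fun_prop)
    _ = ∫⁻ x in Ω, ENNReal.ofReal (u x ^ p) :=
        (setLIntegral_eq_of_support_subset <| Function.support_subset_iff'.2 fun x hx => by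
          simp [hu0 x hx, hp0]).symm
  exact ⟨hvanish, hnorm.trans_lt huLp, hnorm⟩

/-- **Invariance of the `L^p` norm under polarization.**
If `u ≥ 0` is measurable, vanishes off `Ω`, and `u ∈ L^p(Ω)`, then `P_H(u)` vanishes
off `P_H(Ω)`, belongs to `L^p(P_H(Ω))`, and `‖P_H(u)‖_{L^p(P_H(Ω))} = ‖u‖_{L^p(Ω)}`. -/
theorem lp_norm_polarization (d : ℕ) (hd : 1 ≤ d) (p : ℝ) (hp : 1 ≤ p)
    (Ω : Set (Euc d)) (hΩ : IsOpen Ω)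
    (h : Euc d) (a : ℝ) (hh : ‖h‖ = 1)
    (u : Euc d → ℝ) (hum : Measurable u) (hupos : ∀ x, 0 ≤ u x)
    (hu0 : ∀ x, x ∉ Ω → u x = 0)
    (huLp : (∫⁻ x in Ω, ENNReal.ofReal (u x ^ p)) < ⊤) :
    (∀ x, x ∉ polSet h a Ω → polFun h a u x = 0) ∧
    (∫⁻ x in polSet h a Ω, ENNReal.ofReal (polFun h a u x ^ p)) < ⊤ ∧
    (∫⁻ x in polSet h a Ω, ENNReal.ofReal (polFun h a u x ^ p))
      = ∫⁻ x in Ω, ENNReal.ofReal (u x ^ p) :=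
  lp_norm_polarization_general d p hp Ω h a hh u hum hupos hu0 huLp
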